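/- Let (i_1, …, i_n) be a reduced word, π a path with each Θ_{k−1} α_{i_k}-integral, and let α = α_j be a simple root such that Θ_n is α-integral. Set w = w(n) and μ = π(1). Then min_{t∈[0,1]} w(α)(Υ'_n(π)(t)) = w(α)(μ − Υ_n(π)(1)) − ε_α(Θ_n), where ε_α(Θ_n) = −min α∘Θ_n. -/

import Mathlib

/-!
Undoing `w` turns `Υ'_w(π)` into `Θ_w` translated by the constant vector
`w⁻¹(μ − Υ_w(π)(1))`, so `w(α)∘Υ'_w(π) = α∘Θ_w + α(w⁻¹(μ − Υ_w(π)(1)))` and the two minima differ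
by that constant. The only analytic input is that `α∘Θ_w` is bounded below on `[0,1]`, which holds
because `π` is piecewise linear and each `f_β` moves a path only by bounded multiples of `β^∨`.
-/

open Set

namespace MVPaper

variable {V : Type*} [AddCommGroup V] [Module ℝ V]

/-- `π` is piecewise linear (affine) on `[0,1]`. -/
def IsPWLinearOn (π : ℝ → V) : Prop :=
  ∃ (n : ℕ) (t : Fin (n + 1) → ℝ), Monotone t ∧ t 0 = 0 ∧ t (Fin.last n) = 1 ∧
    ∀ i : Fin n, ∃ a b : V, ∀ s ∈ Set.Icc (t i.castSucc) (t i.succ), π s = s • a + b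

/-- A path: continuous piecewise linear with `π 0 = 0`. -/
def IsPath (π : ℝ → V) : Prop := π 0 = 0 ∧ IsPWLinearOn π

/-- `t ∈ (0,1)` is a local minimum point of `f`. -/
def IsLocalMinPt (f : ℝ → ℝ) (t : ℝ) : Prop :=
  t ∈ Set.Ioo (0 : ℝ) 1 ∧ ∀ᶠ s in nhds t, f t ≤ f s

/-- `f` takes integer values at `0`, `1` and at local minimum points. -/
def IsIntegralFn (f : ℝ → ℝ) : Prop :=
  (∃ m : ℤ, f 0 = m) ∧ (∃ m : ℤ, f 1 = m) ∧ ∀ t, IsLocalMinPt f t → ∃ m : ℤ, f t = m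

def IsZeroSectionAt (f : ℝ → ℝ) (m a b : ℝ) : Prop :=
  0 ≤ a ∧ a < b ∧ b ≤ 1 ∧ ∀ t ∈ Set.Icc a b, f t = m

def IsPreStableAt (f : ℝ → ℝ) (m a b : ℝ) : Prop :=
  0 ≤ a ∧ a < b ∧ b ≤ 1 ∧ f a = m ∧ f b = m ∧ ∀ t ∈ Set.Ioo a b, m < f t

/-- A stable section: maximal among intervals on which `f` equals `m` at the ends and is
`> m` inside, for some integer level. -/
def IsStableSectionAt (f : ℝ → ℝ) (m a b : ℝ) : Prop :=
  IsPreStableAt f m a b ∧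
    ∀ (m' : ℤ) (a' b' : ℝ), IsPreStableAt f (m' : ℝ) a' b' → a' ≤ a → b ≤ b' →
      a' = a ∧ b' = b

def IsPosDirectedSectionAt (f : ℝ → ℝ) (m a b : ℝ) : Prop :=
  0 ≤ a ∧ a < b ∧ b ≤ 1 ∧ f a = m ∧ f b = m + 1 ∧
    ∀ t ∈ Set.Ioo a b, m < f t ∧ f t < m + 1

def IsNegDirectedSectionAt (f : ℝ → ℝ) (m a b : ℝ) : Prop :=
  0 ≤ a ∧ a < b ∧ b ≤ 1 ∧ f a = m ∧ f b = m - 1 ∧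
    ∀ t ∈ Set.Ioo a b, m - 1 < f t ∧ f t < m

def IsSectionAt (f : ℝ → ℝ) (a b : ℝ) : Prop :=
  ∃ m : ℤ, IsZeroSectionAt f (m : ℝ) a b ∨ IsStableSectionAt f (m : ℝ) a b ∨
    IsPosDirectedSectionAt f (m : ℝ) a b ∨ IsNegDirectedSectionAt f (m : ℝ) a b

/-- `a` and `b` are consecutive elements of the finite set `T`. -/
def Adjacent (T : Finset ℝ) (a b : ℝ) : Prop :=
  a ∈ T ∧ b ∈ T ∧ a < b ∧ ∀ c ∈ T, c ≤ a ∨ b ≤ c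

/-- `T` is a subdivision of `[0,1]` each of whose consecutive intervals is a section of `f`. -/
def IsSectionDecomposition (f : ℝ → ℝ) (T : Finset ℝ) : Prop :=
  (0 : ℝ) ∈ T ∧ (1 : ℝ) ∈ T ∧ (T : Set ℝ) ⊆ Set.Icc 0 1 ∧
    ∀ a b : ℝ, Adjacent T a b → IsSectionAt f a b

def NoTwoConsecutiveZeroSections (f : ℝ → ℝ) (T : Finset ℝ) : Prop :=
  ∀ a b c : ℝ, Adjacent T a b → Adjacent T b c →
    ¬ ((∃ m : ℤ, IsZeroSectionAt f (m : ℝ) a b) ∧ (∃ m : ℤ, IsZeroSectionAt f (m : ℝ) b c))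

/-- `Q_β(π) = min β∘π` on `[0,1]`. -/
noncomputable def Qval (β : V →ₗ[ℝ] ℝ) (π : ℝ → V) : ℝ :=
  sInf ((fun t => β (π t)) '' Set.Icc (0 : ℝ) 1)

/-- The reflection `s_β(v) = v - β(v)β^∨`. -/
def sRefl (β : V →ₗ[ℝ] ℝ) (βv : V) (v : V) : V := v - β v • βv

/-- `q`, the first time the minimum of `β∘π` is attained. -/
noncomputable def qTime (β : V →ₗ[ℝ] ℝ) (π : ℝ → V) : ℝ :=
  sInf {t | t ∈ Set.Icc (0 : ℝ) 1 ∧ β (π t) = Qval β π}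

/-- `y`, the last time before `q` where `β∘π = Q+1`. -/
noncomputable def yTime (β : V →ₗ[ℝ] ℝ) (π : ℝ → V) : ℝ :=
  sSup {t | t ∈ Set.Icc (0 : ℝ) 1 ∧ t < qTime β π ∧ β (π t) = Qval β π + 1}

/-- Littelmann raising operator. -/
noncomputable def eOp (β : V →ₗ[ℝ] ℝ) (βv : V) (π : ℝ → V) : ℝ → V := fun t =>
  if t ≤ yTime β π then π t
  else if t ≤ qTime β π then π (yTime β π) + sRefl β βv (π t - π (yTime β π))
  else π t + βv

/-- `p`, the last time the minimum of `β∘π` is attained. -/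
noncomputable def pTime (β : V →ₗ[ℝ] ℝ) (π : ℝ → V) : ℝ :=
  sSup {t | t ∈ Set.Icc (0 : ℝ) 1 ∧ β (π t) = Qval β π}

/-- `x`, the first time after `p` where `β∘π = Q+1`. -/
noncomputable def xTime (β : V →ₗ[ℝ] ℝ) (π : ℝ → V) : ℝ :=
  sInf {t | t ∈ Set.Icc (0 : ℝ) 1 ∧ pTime β π < t ∧ β (π t) = Qval β π + 1}

/-- Littelmann lowering operator. -/
noncomputable def fOp (β : V →ₗ[ℝ] ℝ) (βv : V) (π : ℝ → V) : ℝ → V := fun t =>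
  if t ≤ pTime β π then π t
  else if t ≤ xTime β π then π (pTime β π) + sRefl β βv (π t - π (pTime β π))
  else π t - βv

noncomputable def phiVal (β : V →ₗ[ℝ] ℝ) (π : ℝ → V) : ℝ := β (π 1) - Qval β π

/-- `e_β^{max}`: iterate `e_β` while `Q_β ≤ -1`, i.e. `ε_β(π)` many times. -/
noncomputable def eMax (β : V →ₗ[ℝ] ℝ) (βv : V) (π : ℝ → V) : ℝ → V :=
  (eOp β βv)^[⌊-(Qval β π)⌋₊] π

/-- `f_β^{max}`: iterate `f_β` while `φ_β ≥ 1`, i.e. `φ_β(π)` many times. -/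
noncomputable def fMax (β : V →ₗ[ℝ] ℝ) (βv : V) (π : ℝ → V) : ℝ → V :=
  (fOp β βv)^[⌊phiVal β π⌋₊] π

variable {I : Type*}

/-- A root generating system for a generalized Cartan matrix. -/
def IsRootGenSystem (α : I → (V →ₗ[ℝ] ℝ)) (αv : I → V) : Prop :=
  LinearIndependent ℝ α ∧ LinearIndependent ℝ αv ∧
  (∀ i, α i (αv i) = 2) ∧
  (∀ i j, i ≠ j → ∃ n : ℤ, n ≤ 0 ∧ α j (αv i) = (n : ℝ)) ∧
  (∀ i j, α j (αv i) = 0 ↔ α i (αv j) = 0)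

/-- The simple reflection `s_i`. -/
def si (α : I → (V →ₗ[ℝ] ℝ)) (αv : I → V) (i : I) : V → V :=
  fun v => v - α i v • αv i

/-- The product `s_{i_1} ∘ ⋯ ∘ s_{i_n}` associated to a word `[i_1, …, i_n]`. -/
def wProd (α : I → (V →ₗ[ℝ] ℝ)) (αv : I → V) (c : List I) : V → V :=
  c.foldr (fun i g => (si α αv i) ∘ g) id

/-- A word is reduced if its Weyl group element cannot be written with fewer generators. -/
def IsReducedWord (α : I → (V →ₗ[ℝ] ℝ)) (αv : I → V) (c : List I) : Prop :=
  ∀ c' : List I, wProd α αv c' = wProd α αv c → c.length ≤ c'.length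

/-- `Θ` for the word `[i_1, …, i_k]`: `f_{α_{i_k}}^{max} ⋯ f_{α_{i_1}}^{max} (π)`. -/
noncomputable def ThetaPath (α : I → (V →ₗ[ℝ] ℝ)) (αv : I → V) (c : List I) (π : ℝ → V) :
    ℝ → V :=
  c.foldl (fun σ i => fMax (α i) (αv i) σ) π

/-- Each `Θ_{k-1}` is `α_{i_k}`-integral. -/
def ThetaIntegral (α : I → (V →ₗ[ℝ] ℝ)) (αv : I → V) (c : List I) (π : ℝ → V) : Prop :=
  ∀ k : Fin c.length,
    IsIntegralFn (fun t => α (c.get k) (ThetaPath α αv (c.take k) π t))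

/-- `Υ_w(π) = w ∘ f_w^{max}(π)`. -/
noncomputable def UpsPath (α : I → (V →ₗ[ℝ] ℝ)) (αv : I → V) (c : List I) (π : ℝ → V) :
    ℝ → V :=
  fun t => wProd α αv c (ThetaPath α αv c π t)

/-- `Υ'_w(π)`, the translate of `Υ_w(π)` ending at `π(1)`. -/
noncomputable def UpsPath' (α : I → (V →ₗ[ℝ] ℝ)) (αv : I → V) (c : List I) (π : ℝ → V) :
    ℝ → V :=
  fun t => UpsPath α αv c π t + (π 1 - UpsPath α αv c π 1)

section Reflections

variable (α : I → (V →ₗ[ℝ] ℝ)) (αv : I → V)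

lemma si_add (i : I) (u v : V) : si α αv i (u + v) = si α αv i u + si α αv i v := by
  simp only [si, map_add, add_smul]
  abel

lemma si_si {i : I} (h2 : α i (αv i) = 2) (v : V) : si α αv i (si α αv i v) = v := by
  simp only [si, map_sub, map_smul, smul_eq_mul, h2]
  module

lemma wProd_append (c d : List I) (v : V) :
    wProd α αv (c ++ d) v = wProd α αv c (wProd α αv d v) := by
  induction c with
  | nil => rfl
  | cons i c ih => exact congrArg (si α αv i) ih

lemma wProd_add (c : List I) (u v : V) :
    wProd α αv c (u + v) = wProd α αv c u + wProd α αv c v := by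
  induction c with
  | nil => rfl
  | cons i c ih => exact (congrArg (si α αv i) ih).trans (si_add α αv i _ _)

lemma wProd_reverse_wProd (h2 : ∀ i, α i (αv i) = 2) (c : List I) (v : V) :
    wProd α αv c.reverse (wProd α αv c v) = v := by
  induction c generalizing v with
  | nil => rfl
  | cons i c ih =>
    rw [List.reverse_cons, wProd_append]
    exact (congrArg (wProd α αv c.reverse) (si_si α αv (h2 i) _)).trans (ih v)

lemma wProd_reverse_upsPath' (h2 : ∀ i, α i (αv i) = 2) (c : List I) (π : ℝ → V) (t : ℝ) :
    wProd α αv c.reverse (UpsPath' α αv c π t)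
      = ThetaPath α αv c π t + wProd α αv c.reverse (π 1 - UpsPath α αv c π 1) := by
  rw [UpsPath', UpsPath, wProd_add, wProd_reverse_wProd α αv h2]

end Reflections

lemma exists_mem_Icc_castSucc_succ {L : Type*} [LinearOrder L] {n : ℕ} (t : Fin (n + 2) → L)
    {s : L} (h0 : t 0 ≤ s) (h1 : s ≤ t (Fin.last (n + 1))) :
    ∃ i : Fin (n + 1), s ∈ Icc (t i.castSucc) (t i.succ) := by
  induction n with
  | zero => exact ⟨0, h0, h1⟩
  | succ n ih =>
    by_cases hs : s ≤ t (Fin.last (n + 1)).castSucc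
    · obtain ⟨i, hi⟩ := ih (t ∘ Fin.castSucc) h0 hs
      exact ⟨i.castSucc, hi⟩
    · exact ⟨Fin.last (n + 1), (not_le.mp hs).le, h1⟩

def BoundedOnUnitInterval (g : ℝ → V) : Prop :=
  ∀ γ : V →ₗ[ℝ] ℝ, ∃ C : ℝ, ∀ u ∈ Icc (0 : ℝ) 1, |γ (g u)| ≤ C

lemma BoundedOnUnitInterval.add_smul {g : ℝ → V} (hg : BoundedOnUnitInterval g) {c : ℝ → ℝ}
    (hc : ∃ C : ℝ, ∀ u ∈ Icc (0 : ℝ) 1, |c u| ≤ C) (v : V) :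
    BoundedOnUnitInterval (fun u => g u + c u • v) := by
  intro γ
  obtain ⟨Cg, hCg⟩ := hg γ
  obtain ⟨Cc, hCc⟩ := hc
  refine ⟨Cg + Cc * |γ v|, fun u hu => ?_⟩
  calc |γ (g u + c u • v)| = |γ (g u) + c u * γ v| := by
        rw [map_add, map_smul, smul_eq_mul]
    _ ≤ |γ (g u)| + |c u| * |γ v| := (abs_add_le _ _).trans_eq (by rw [abs_mul])
    _ ≤ Cg + Cc * |γ v| := add_le_add (hCg u hu) (by gcongr; exact hCc u hu)

lemma boundedOnUnitInterval_of_isPath {π : ℝ → V} (hπ : IsPath π) :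
    BoundedOnUnitInterval π := by
  obtain ⟨-, n, t, -, h0, h1, hpieces⟩ := hπ
  choose a b hab using hpieces
  obtain ⟨m, rfl⟩ : ∃ m, n = m + 1 := by
    refine Nat.exists_eq_add_one_of_ne_zero fun hn => ?_
    subst hn
    exact zero_ne_one (h0.symm.trans h1)
  intro γ
  refine ⟨∑ i, (|γ (a i)| + |γ (b i)|), fun u hu => ?_⟩
  obtain ⟨i, hi⟩ := exists_mem_Icc_castSucc_succ t (h0 ▸ hu.1) (h1 ▸ hu.2)
  have hu1 : |u| ≤ 1 := abs_le.mpr ⟨by linarith [hu.1], hu.2⟩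
  calc |γ (π u)| = |u * γ (a i) + γ (b i)| := by
        rw [hab i u hi, map_add, map_smul, smul_eq_mul]
    _ ≤ |u| * |γ (a i)| + |γ (b i)| := (abs_add_le _ _).trans_eq (by rw [abs_mul])
    _ ≤ |γ (a i)| + |γ (b i)| := by
        gcongr
        exact mul_le_of_le_one_left (abs_nonneg _) hu1
    _ ≤ ∑ i, (|γ (a i)| + |γ (b i)|) :=
        Finset.single_le_sum (f := fun i => |γ (a i)| + |γ (b i)|)
          (fun _ _ => by positivity) (Finset.mem_univ i)

lemma pTime_mem_Icc (β : V →ₗ[ℝ] ℝ) (g : ℝ → V) : pTime β g ∈ Icc (0 : ℝ) 1 := by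
  rcases ({u | u ∈ Icc (0 : ℝ) 1 ∧ β (g u) = Qval β g}).eq_empty_or_nonempty with h | ⟨u, hu⟩
  · rw [pTime, h, Real.sSup_empty]
    exact ⟨le_rfl, zero_le_one⟩
  · exact ⟨hu.1.1.trans (le_csSup ⟨1, fun y hy => hy.1.2⟩ hu),
      csSup_le ⟨u, hu⟩ fun y hy => hy.1.2⟩

lemma fOp_eq_add_smul (β : V →ₗ[ℝ] ℝ) (βv : V) (g : ℝ → V) :
    fOp β βv g = fun u => g u +
      (if u ≤ pTime β g then 0
        else if u ≤ xTime β g then β (g (pTime β g)) - β (g u) else -1) • βv := by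
  funext u
  simp only [fOp, sRefl, map_sub]
  split_ifs <;> module

lemma BoundedOnUnitInterval.fOp {g : ℝ → V} (hg : BoundedOnUnitInterval g) (β : V →ₗ[ℝ] ℝ)
    (βv : V) : BoundedOnUnitInterval (fOp β βv g) := by
  rw [fOp_eq_add_smul]
  refine hg.add_smul ?_ βv
  obtain ⟨C, hC⟩ := hg β
  have hp := hC _ (pTime_mem_Icc β g)
  refine ⟨2 * C + 1, fun u hu => ?_⟩
  have hu := hC u hu
  have hC0 : 0 ≤ C := (abs_nonneg _).trans hu
  split_ifs
  · simp only [abs_zero]; linarith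
  · linarith [abs_sub (β (g (pTime β g))) (β (g u))]
  · norm_num; linarith

lemma BoundedOnUnitInterval.fMax {g : ℝ → V} (hg : BoundedOnUnitInterval g) (β : V →ₗ[ℝ] ℝ)
    (βv : V) : BoundedOnUnitInterval (fMax β βv g) :=
  Function.Iterate.rec BoundedOnUnitInterval hg (fun _ h => h.fOp β βv) _

lemma BoundedOnUnitInterval.thetaPath (α : I → (V →ₗ[ℝ] ℝ)) (αv : I → V) (c : List I)
    {π : ℝ → V} (hπ : BoundedOnUnitInterval π) : BoundedOnUnitInterval (ThetaPath α αv c π) := by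
  induction c generalizing π with
  | nil => exact hπ
  | cons i c ih => exact ih (hπ.fMax (α i) (αv i))

lemma BoundedOnUnitInterval.bddBelow {g : ℝ → V} (hg : BoundedOnUnitInterval g)
    (γ : V →ₗ[ℝ] ℝ) : BddBelow ((fun u => γ (g u)) '' Icc (0 : ℝ) 1) := by
  obtain ⟨C, hC⟩ := hg γ
  exact ⟨-C, forall_mem_image.mpr fun u hu => neg_le_of_abs_le (hC u hu)⟩

lemma csInf_image_add_const {s : Set ℝ} (hne : s.Nonempty) (hbdd : BddBelow s) (K : ℝ) :
    sInf ((· + K) '' s) = sInf s + K :=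
  ((OrderIso.addRight K).map_csInf' hne hbdd).symm

theorem min_of_upsPath' {V : Type*} [AddCommGroup V] [Module ℝ V]
    {I : Type*}
    (α : I → (V →ₗ[ℝ] ℝ)) (αv : I → V) (hrs : IsRootGenSystem α αv)
    (w : List I)
    (π : ℝ → V) (hπ : IsPath π)
    (j : I) :
    sInf ((fun t => α j (wProd α αv w.reverse (UpsPath' α αv w π t))) '' Set.Icc (0 : ℝ) 1)
      = α j (wProd α αv w.reverse (π 1 - UpsPath α αv w π 1))
        + Qval (α j) (ThetaPath α αv w π) := by
  set K := α j (wProd α αv w.reverse (π 1 - UpsPath α αv w π 1))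
  set S := (fun t => α j (ThetaPath α αv w π t)) '' Icc (0 : ℝ) 1
  have hshift : (fun t => α j (wProd α αv w.reverse (UpsPath' α αv w π t))) '' Icc (0 : ℝ) 1
      = (· + K) '' S := by
    rw [image_image]
    refine image_congr fun t _ => ?_
    rw [wProd_reverse_upsPath' α αv hrs.2.2.1, map_add]
  have hne : S.Nonempty := (nonempty_Icc.mpr zero_le_one).image _
  have hbdd : BddBelow S :=
    ((boundedOnUnitInterval_of_isPath hπ).thetaPath α αv w).bddBelow (α j)
  rw [hshift, csInf_image_add_const hne hbdd, add_comm, Qval]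

end MVPaper
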